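/- Let L = L_I ∪ L_U with L_I ∩ L_U = ∅. Let S be a deterministic IOLTS over L without τ-transitions whose state type has cardinality n, and let I be an IOLTS over L without τ-transitions whose state type has cardinality m. If I does not ioco-conform to S, then there exist σ ∈ L* and x ∈ L_U such that σ ∈ otr(S), σ·x ∈ otr(I), σ·x ∉ otr(S), and the length of σ·x is at most m·(n+1). -/

import Mathlib

/-!
Run `I` and `S` in lockstep. A violating trace `σ` together with the output `x` that `I` can
produce after it gives a path of the synchronous product `I × S`, and cutting the loops out of that
path leaves a trace of length below `m * n` that still ends in the same pair of states. Since `S` is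
deterministic, its state after this short trace is the unique one, which refuses `x`.
-/

/-- Paths of a τ-free LTS: `LPath step s σ q` means there is a path from `s`
to `q` labeled by the word `σ`. -/
inductive LPath {S L : Type*} (step : S → L → S → Prop) : S → List L → S → Prop
  | refl (s : S) : LPath step s [] s
  | cons {s r q : S} {l : L} {σ : List L} :
      step s l r → LPath step r σ q → LPath step s (l :: σ) q

/-- Trace language of a τ-free LTS with initial state `s0`. -/
def otr {S L : Type*} (step : S → L → S → Prop) (s0 : S) : Set (List L) :=
  {σ | ∃ q, LPath step s0 σ q}

/-- `s after σ`: the set of states reachable from `s` via the word `σ`. -/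
def after {S L : Type*} (step : S → L → S → Prop) (s : S) (σ : List L) : Set S :=
  {q | LPath step s σ q}

/-- `out(Q')`: the set of output labels enabled in some state of `Q'`. -/
def outOf {S L : Type*} (LU : Set L) (step : S → L → S → Prop) (Q' : Set S) :
    Set L :=
  {x | x ∈ LU ∧ ∃ q ∈ Q', ∃ q', step q x q'}

namespace LPath

variable {S L : Type*} {step : S → L → S → Prop}

theorem append_iff {s q : S} {σ τ : List L} :
    LPath step s (σ ++ τ) q ↔ ∃ r, LPath step s σ r ∧ LPath step r τ q := by
  constructor
  · induction σ generalizing s with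
    | nil => exact fun h => ⟨s, .refl s, h⟩
    | cons l σ ih =>
      rintro (_ | ⟨hst, hp⟩)
      obtain ⟨r, h₁, h₂⟩ := ih hp
      exact ⟨r, .cons hst h₁, h₂⟩
  · rintro ⟨r, h₁, h₂⟩
    induction h₁ with
    | refl => exact h₂
    | cons hst _ ih => exact .cons hst (ih h₂)

theorem eq_of_deterministic (hdet : ∀ s l s₁ s₂, step s l s₁ → step s l s₂ → s₁ = s₂)
    {σ : List L} {s q₁ q₂ : S} (h₁ : LPath step s σ q₁) (h₂ : LPath step s σ q₂) : q₁ = q₂ := by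
  induction h₁ with
  | refl => cases h₂; rfl
  | cons hst _ ih =>
    obtain _ | ⟨hst', hp⟩ := h₂
    exact ih (hdet _ _ _ _ hst' hst ▸ hp)

theorem map {T : Type*} {step' : T → L → T → Prop} (f : S → T)
    (hf : ∀ s l r, step s l r → step' (f s) l (f r)) {s q : S} {σ : List L}
    (h : LPath step s σ q) : LPath step' (f s) σ (f q) := by
  induction h with
  | refl => exact .refl _
  | cons hst _ ih => exact .cons (hf _ _ _ hst) ih

/-- Pigeonhole on the `σ.length + 1` intermediate states: two of them coincide, and the loop
between them can be cut out. -/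
theorem exists_shorter [Fintype S] {a b : S} {σ : List L} (hσ : Fintype.card S ≤ σ.length)
    (h : LPath step a σ b) : ∃ τ : List L, τ.length < σ.length ∧ LPath step a τ b := by
  have hsplit : ∀ i : Fin (σ.length + 1),
      ∃ r, LPath step a (σ.take i) r ∧ LPath step r (σ.drop i) b :=
    fun i => append_iff.1 (by rwa [List.take_append_drop])
  choose mid hpre hsuf using hsplit
  obtain ⟨i, j, hne, heq⟩ :=
    Fintype.exists_ne_map_eq_of_card_lt mid (by simpa using Nat.lt_succ_of_le hσ)
  wlog hij : i < j generalizing i j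
  · exact this j i hne.symm heq.symm (hne.lt_or_gt.resolve_left hij)
  refine ⟨σ.take i ++ σ.drop j, ?_, append_iff.2 ⟨mid i, hpre i, heq ▸ hsuf j⟩⟩
  have hj : (j : ℕ) ≤ σ.length := Nat.lt_succ_iff.1 j.isLt
  simp only [List.length_append, List.length_take, List.length_drop]
  omega

theorem exists_length_lt_card [Fintype S] {a b : S} {σ : List L} (h : LPath step a σ b) :
    ∃ τ : List L, τ.length < Fintype.card S ∧ LPath step a τ b := by
  induction hlen : σ.length using Nat.strong_induction_on generalizing σ with
  | _ k ih =>
    by_cases hk : k < Fintype.card S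
    · exact ⟨σ, hlen ▸ hk, h⟩
    obtain ⟨τ, hlt, hτ⟩ := h.exists_shorter (by omega)
    exact ih _ (hlen ▸ hlt) hτ rfl

end LPath

def syncProd {Q S L : Type*} (stepI : Q → L → Q → Prop) (stepS : S → L → S → Prop) :
    Q × S → L → Q × S → Prop :=
  fun p l p' => stepI p.1 l p'.1 ∧ stepS p.2 l p'.2

theorem lpath_syncProd_iff {Q S L : Type*} {stepI : Q → L → Q → Prop}
    {stepS : S → L → S → Prop} {q₀ q : Q} {s₀ s : S} {σ : List L} :
    LPath (syncProd stepI stepS) (q₀, s₀) σ (q, s) ↔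
      LPath stepI q₀ σ q ∧ LPath stepS s₀ σ s := by
  refine ⟨fun h => ⟨h.map Prod.fst fun _ _ _ hst => hst.1, h.map Prod.snd fun _ _ _ hst => hst.2⟩,
    ?_⟩
  rintro ⟨hI, hS⟩
  induction hI generalizing s₀ with
  | refl => cases hS; exact .refl _
  | cons hst _ ih =>
    obtain _ | ⟨hst', hp⟩ := hS
    exact .cons ⟨hst, hst'⟩ (ih hp)

theorem append_singleton_mem_otr_iff {S L : Type*} {step : S → L → S → Prop}
    (hdet : ∀ s l s₁ s₂, step s l s₁ → step s l s₂ → s₁ = s₂)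
    {s₀ s : S} {σ : List L} (hσ : LPath step s₀ σ s) (x : L) :
    σ ++ [x] ∈ otr step s₀ ↔ ∃ s', step s x s' := by
  constructor
  · rintro ⟨t, ht⟩
    obtain ⟨u, hu, _ | ⟨hstep, _⟩⟩ := LPath.append_iff.1 ht
    exact ⟨_, LPath.eq_of_deterministic hdet hu hσ ▸ hstep⟩
  · rintro ⟨s', hstep⟩
    exact ⟨s', LPath.append_iff.2 ⟨s, hσ, .cons hstep (.refl _)⟩⟩

theorem short_witness_of_not_ioco_general {L SS Q : Type*} [Fintype SS] [Fintype Q]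
    (LU : Set L)
    (stepS : SS → L → SS → Prop) (s0 : SS)
    (hdet : ∀ s l s1 s2, stepS s l s1 → stepS s l s2 → s1 = s2)
    (stepI : Q → L → Q → Prop) (q0 : Q)
    (n m : ℕ) (hn : Fintype.card SS = n) (hm : Fintype.card Q = m)
    (h : ¬ (∀ σ ∈ otr stepS s0,
        outOf LU stepI (after stepI q0 σ) ⊆ outOf LU stepS (after stepS s0 σ))) :
    ∃ σ : List L, ∃ x ∈ LU, σ ∈ otr stepS s0 ∧ σ ++ [x] ∈ otr stepI q0 ∧
      σ ++ [x] ∉ otr stepS s0 ∧ (σ ++ [x]).length ≤ m * (n + 1) := by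
  push Not at h
  obtain ⟨σ, ⟨s, hs⟩, hsub⟩ := h
  obtain ⟨x, ⟨hxLU, q, hq, q', hstep⟩, hxS⟩ := Set.not_subset.1 hsub
  obtain ⟨τ, hτlen, hτ⟩ :=
    (lpath_syncProd_iff.2 ⟨hq, hs⟩ : LPath (syncProd stepI stepS) _ σ _).exists_length_lt_card
  obtain ⟨hτI, hτS⟩ := lpath_syncProd_iff.1 hτ
  rw [Fintype.card_prod, hm, hn] at hτlen
  refine ⟨τ, x, hxLU, ⟨s, hτS⟩, ⟨q', LPath.append_iff.2 ⟨q, hτI, .cons hstep (.refl _)⟩⟩,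
    fun hτx => hxS ⟨hxLU, s, hs, (append_singleton_mem_otr_iff hdet hτS x).1 hτx⟩, ?_⟩
  rw [List.length_append, List.length_singleton]
  nlinarith

/-- if a τ-free IOLTS `I` with `m` states does not ioco-conform to
a deterministic τ-free IOLTS `S` with `n` states, then there is a witness
`σ ++ [x]` of length at most `m * (n + 1)`. -/
theorem short_witness_of_not_ioco {L SS Q : Type*} [Fintype SS] [Fintype Q]
    (LI LU : Set L) (h_union : LI ∪ LU = Set.univ) (h_disj : LI ∩ LU = ∅)
    (stepS : SS → L → SS → Prop) (s0 : SS)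
    (hdet : ∀ s l s1 s2, stepS s l s1 → stepS s l s2 → s1 = s2)
    (stepI : Q → L → Q → Prop) (q0 : Q)
    (n m : ℕ) (hn : Fintype.card SS = n) (hm : Fintype.card Q = m)
    (h : ¬ (∀ σ ∈ otr stepS s0,
        outOf LU stepI (after stepI q0 σ) ⊆ outOf LU stepS (after stepS s0 σ))) :
    ∃ σ : List L, ∃ x ∈ LU, σ ∈ otr stepS s0 ∧ σ ++ [x] ∈ otr stepI q0 ∧
      σ ++ [x] ∉ otr stepS s0 ∧ (σ ++ [x]).length ≤ m * (n + 1) :=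
  short_witness_of_not_ioco_general LU stepS s0 hdet stepI q0 n m hn hm h
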